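/- Every finite group G of order 12 satisfies Ω_ρ(G) ≥ 11, and Ω_ρ(G) = 11 if and only if G ≅ A_4. -/

import Mathlib

noncomputable def rho (G : Type*) [Group G] : ℕ := ∏ᶠ x : G, orderOf x

noncomputable def OmegaRho (G : Type*) [Group G] : ℕ :=
  ArithmeticFunction.cardFactors (rho G)

section ArithLayer
open ArithmeticFunction
open scoped ArithmeticFunction.Omega
lemma om2 : Ω 2 = 1 := cardFactors_apply_prime Nat.prime_two
lemma om3 : Ω 3 = 1 := cardFactors_apply_prime Nat.prime_three
lemma om4 : Ω 4 = 2 := by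
  rw [show (4:ℕ) = 2*2 by norm_num, cardFactors_mul two_ne_zero two_ne_zero, om2]
lemma om6 : Ω 6 = 2 := by
  rw [show (6:ℕ) = 2*3 by norm_num, cardFactors_mul two_ne_zero three_ne_zero, om2, om3]
lemma om12 : Ω 12 = 3 := by
  rw [show (12:ℕ) = 2*6 by norm_num, cardFactors_mul two_ne_zero (by norm_num), om2, om6]

lemma divisors12 (n : ℕ) (hd : n ∣ 12) :
    n = 1 ∨ n = 2 ∨ n = 3 ∨ n = 4 ∨ n = 6 ∨ n = 12 := by
  have h1 : 1 ≤ n := Nat.pos_of_dvd_of_pos hd (by norm_num)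
  have h2 : n ≤ 12 := Nat.le_of_dvd (by norm_num) hd
  interval_cases n <;> revert hd <;> decide

lemma cardFactors_finset_prod {ι : Type*} (s : Finset ι) (f : ι → ℕ)
    (hf : ∀ i ∈ s, f i ≠ 0) : Ω (∏ i ∈ s, f i) = ∑ i ∈ s, Ω (f i) := by
  classical
  induction s using Finset.cons_induction with
  | empty => simp
  | cons a s ha ih =>
    rw [Finset.prod_cons, Finset.sum_cons,
      cardFactors_mul (hf a (Finset.mem_cons_self a s))
        (Finset.prod_ne_zero_iff.mpr fun i hi => hf i (Finset.mem_cons_of_mem hi)),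
      ih fun i hi => hf i (Finset.mem_cons_of_mem hi)]

lemma omegaRho_eq (G : Type*) [Group G] [Fintype G] :
    OmegaRho G = ∑ x : G, Ω (orderOf x) := by
  rw [OmegaRho, rho, finprod_eq_prod_of_fintype, cardFactors_finset_prod]
  exact fun i _ => (orderOf_pos i).ne'

lemma omegaRho_twelve (G : Type*) [Group G] [Fintype G] (h : Fintype.card G = 12) :
    11 ≤ OmegaRho G ∧
    (OmegaRho G = 11 ↔ ∀ x : G, orderOf x = 1 ∨ orderOf x = 2 ∨ orderOf x = 3) := by
  classical
  have hcard : (Finset.univ.erase (1 : G)).card = 11 := by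
    rw [Finset.card_erase_of_mem (Finset.mem_univ _), Finset.card_univ, h]
  have hsum : OmegaRho G = ∑ x ∈ Finset.univ.erase (1 : G), Ω (orderOf x) := by
    rw [omegaRho_eq, ← Finset.sum_erase_add _ _ (Finset.mem_univ (1 : G)), orderOf_one]
    simp
  have hdvd : ∀ x : G, orderOf x ∣ 12 := fun x => by
    have := orderOf_dvd_card (x := x); rwa [h] at this
  have hge : ∀ x ∈ Finset.univ.erase (1 : G), 1 ≤ Ω (orderOf x) := by
    intro x hx
    have hx1 : x ≠ 1 := (Finset.mem_erase.mp hx).1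
    have h1 : orderOf x ≠ 1 := fun hc => hx1 (orderOf_eq_one_iff.mp hc)
    rcases divisors12 _ (hdvd x) with h' | h' | h' | h' | h' | h' <;>
      rw [h'] <;> first
        | exact absurd h' h1
        | simp [om2, om3, om4, om6, om12]
  constructor
  · calc (11:ℕ) = ∑ _x ∈ Finset.univ.erase (1 : G), 1 := by rw [Finset.sum_const, hcard]; ring
    _ ≤ _ := by rw [hsum]; exact Finset.sum_le_sum hge
  · constructor
    · intro h11 x
      by_contra hc
      push_neg at hc
      obtain ⟨hn1, hn2, hn3⟩ := hc
      have hx1 : x ≠ 1 := fun hc => hn1 (by simp [hc])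
      have : orderOf x = 4 ∨ orderOf x = 6 ∨ orderOf x = 12 := by
        rcases divisors12 _ (hdvd x) with h' | h' | h' | h' | h' | h' <;> tauto
      have h2 : 2 ≤ Ω (orderOf x) := by
        rcases this with h' | h' | h' <;> rw [h'] <;> simp [om4, om6, om12]
      have : 11 < OmegaRho G := by
        rw [hsum]
        calc 11 = ∑ _x ∈ Finset.univ.erase (1 : G), 1 := by rw [Finset.sum_const, hcard]; ring
        _ < _ := Finset.sum_lt_sum hge ⟨x, Finset.mem_erase.mpr ⟨hx1, Finset.mem_univ _⟩, h2⟩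
      omega
    · intro hall
      rw [hsum]
      have : ∀ x ∈ Finset.univ.erase (1 : G), Ω (orderOf x) = 1 := by
        intro x hx
        have hx1 : x ≠ 1 := (Finset.mem_erase.mp hx).1
        rcases hall x with h' | h' | h'
        · exact absurd (orderOf_eq_one_iff.mp h') hx1
        · rw [h', om2]
        · rw [h', om3]
      rw [Finset.sum_congr rfl this, Finset.sum_const, hcard]; ring

end ArithLayer

open Equiv

lemma f12_2 : (12 : ℕ).factorization 2 = 2 := by
  have h : (12:ℕ) = 2^2*3 := by norm_num
  rw [h, Nat.factorization_mul (by norm_num) (by norm_num),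
    Nat.Prime.factorization_pow Nat.prime_two]
  simp [Nat.Prime.factorization, Nat.prime_three]

lemma f12_3 : (12 : ℕ).factorization 3 = 1 := by
  have h : (12:ℕ) = 2^2*3 := by norm_num
  rw [h, Nat.factorization_mul (by norm_num) (by norm_num),
    Nat.Prime.factorization_pow Nat.prime_two]
  simp [Nat.Prime.factorization, Nat.prime_three, Finsupp.single_apply]

section Classify
variable (G : Type*) [Group G]

lemma sylow3_card_ne_one [Fintype G] (h : Nat.card G = 12)
    (H : ∀ x : G, orderOf x = 1 ∨ orderOf x = 2 ∨ orderOf x = 3) :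
    Nat.card (Sylow 3 G) ≠ 1 := by
  haveI : Fact (Nat.Prime 3) := ⟨Nat.prime_three⟩
  haveI : Fact (Nat.Prime 2) := ⟨Nat.prime_two⟩
  classical
  have hF : Fintype.card G = 12 := by rw [← Nat.card_eq_fintype_card]; exact h
  intro hc1
  haveI : Subsingleton (Sylow 3 G) := (Nat.card_eq_one_iff_unique.mp hc1).1
  obtain ⟨y, hy3⟩ := exists_prime_orderOf_dvd_card 3 (by rw [hF]; norm_num)
  have hyP : IsPGroup 3 (Subgroup.zpowers y) := by
    apply IsPGroup.of_card
    rw [Nat.card_zpowers, hy3, pow_one]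
  obtain ⟨Q, hQ⟩ := hyP.exists_le_sylow
  have hQcard : Nat.card (Q : Subgroup G) = 3 := by
    rw [Q.card_eq_multiplicity, h, f12_3, pow_one]
  have hzQ : Subgroup.zpowers y = (Q : Subgroup G) := by
    apply Subgroup.eq_of_le_of_card_ge hQ
    rw [hQcard, Nat.card_zpowers, hy3]
  have hN : (Q : Subgroup G).Normal := by
    rw [← Subgroup.normalizer_eq_top_iff]
    apply top_unique
    intro g _
    exact (Sylow.smul_eq_iff_mem_normalizer (g := g) (P := Q)).mp (Subsingleton.elim _ _)
  have claim : ∀ x : G, orderOf x = 2 → x * y * x⁻¹ = y⁻¹ := by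
    intro x hx2
    have hmem : x * y * x⁻¹ ∈ Subgroup.zpowers y := by
      rw [hzQ]
      exact hN.conj_mem y (hzQ ▸ Subgroup.mem_zpowers y) x
    rw [← mem_powers_iff_mem_zpowers] at hmem
    obtain ⟨k, hk⟩ := (Submonoid.mem_powers_iff _ _).mp hmem
    rw [← pow_mod_orderOf, hy3] at hk
    have hklt : k % 3 < 3 := Nat.mod_lt _ (by norm_num)
    interval_cases hm : (k % 3)
    · exfalso
      rw [pow_zero] at hk
      have hy1 : y = 1 := by
        have h' : x * y * x⁻¹ = 1 := hk.symm
        have : y = x⁻¹ * (x * y * x⁻¹) * x := by group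
        rw [h'] at this
        rw [this]; group
      rw [hy1, orderOf_one] at hy3; norm_num at hy3
    · exfalso
      rw [pow_one] at hk
      have hcomm : Commute x y := by
        unfold Commute SemiconjBy
        have h' : x * y * x⁻¹ = y := hk.symm
        calc x * y = (x * y * x⁻¹) * x := by group
        _ = y * x := by rw [h']
      have h6 : orderOf (x * y) = 6 := by
        rw [hcomm.orderOf_mul_eq_mul_orderOf_of_coprime (by rw [hx2, hy3]; norm_num), hx2, hy3]
      rcases H (x * y) with h' | h' | h' <;> omega
    · rw [← hk]
      have h3 : y ^ 3 = 1 := by rw [← hy3]; exact pow_orderOf_eq_one y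
      apply eq_inv_of_mul_eq_one_left
      rw [← pow_succ]
      exact h3
  -- Sylow 2 and final contradiction
  obtain ⟨P2⟩ : Nonempty (Sylow 2 G) := inferInstance
  have hc2 : Nat.card (P2 : Subgroup G) = 4 := by
    rw [P2.card_eq_multiplicity, h, f12_2]; norm_num
  have ord2 : ∀ z : (P2 : Subgroup G), z ≠ 1 → orderOf (z : G) = 2 := by
    intro z hz
    have hdvd : orderOf (z : G) ∣ 4 := hc2 ▸ Subgroup.orderOf_dvd_natCard _ z.2
    have hne : orderOf (z : G) ≠ 1 := by
      rw [Ne, orderOf_eq_one_iff]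
      exact fun hc => hz (Subtype.ext (by simpa using hc))
    rcases H (z : G) with h' | h' | h'
    · exact absurd h' hne
    · exact h'
    · rw [h'] at hdvd; norm_num at hdvd
  have hFt : Fintype.card (P2 : Subgroup G) = 4 := by
    rw [← Nat.card_eq_fintype_card]; exact hc2
  -- pick two distinct nontrivial elements
  classical
  set F1 := Finset.univ.erase (1 : (P2 : Subgroup G)) with hF1def
  have hF1 : F1.card = 3 := by
    rw [hF1def, Finset.card_erase_of_mem (Finset.mem_univ _), Finset.card_univ, hFt]
  obtain ⟨s, hs⟩ : F1.Nonempty := Finset.card_pos.mp (by omega)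
  have hs1 : s ≠ 1 := (Finset.mem_erase.mp hs).1
  obtain ⟨t, ht⟩ : (F1.erase s).Nonempty := by
    apply Finset.card_pos.mp
    rw [Finset.card_erase_of_mem hs, hF1]; norm_num
  have hts : t ≠ s := (Finset.mem_erase.mp ht).1
  have ht1 : t ≠ 1 := (Finset.mem_erase.mp (Finset.mem_erase.mp ht).2).1
  have hst1 : s * t ≠ 1 := by
    intro hc
    have hs2 : s * s = 1 := by
      have h2 := pow_orderOf_eq_one (s : G)
      rw [ord2 s hs1, pow_two] at h2
      apply Subtype.ext
      push_cast
      exact h2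
    have hse : s⁻¹ = s := inv_eq_of_mul_eq_one_right hs2
    have : t = s := by
      rw [← one_mul t, ← inv_mul_cancel s, mul_assoc, hc, mul_one, hse]
    exact hts this
  have e1 := claim (s : G) (ord2 s hs1)
  have e2 := claim (t : G) (ord2 t ht1)
  have e3 := claim ((s : G) * (t : G)) (by
    rw [show (s:G) * (t:G) = ((s*t : (P2 : Subgroup G)) : G) by push_cast; ring_nf]
    exact ord2 _ hst1)
  have key : ((s:G) * t) * y * ((s:G) * t)⁻¹ = y := by
    calc ((s:G) * t) * y * ((s:G) * t)⁻¹ = (s:G) * ((t:G) * y * (t:G)⁻¹) * (s:G)⁻¹ := by group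
    _ = (s:G) * y⁻¹ * (s:G)⁻¹ := by rw [e2]
    _ = ((s:G) * y * (s:G)⁻¹)⁻¹ := by group
    _ = y := by rw [e1, inv_inv]
  have hyy : y⁻¹ = y := by rw [← e3, key]
  have : y ^ 2 = 1 := by
    rw [pow_two]
    nth_rewrite 2 [← hyy]
    exact mul_inv_cancel y
  have hd : orderOf y ∣ 2 := orderOf_dvd_iff_pow_eq_one.mpr this
  rw [hy3] at hd; norm_num at hd


lemma divisors4 (n : ℕ) (hd : n ∣ 4) : n = 1 ∨ n = 2 ∨ n = 4 := by
  have h1 : 1 ≤ n := Nat.pos_of_dvd_of_pos hd (by norm_num)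
  have h2 : n ≤ 4 := Nat.le_of_dvd (by norm_num) hd
  interval_cases n <;> revert hd <;> decide

end Classify

/-- `Equiv.permCongr` as a `MulEquiv`. -/
def permCongrMulEquiv {α β : Type*} (e : α ≃ β) : Equiv.Perm α ≃* Equiv.Perm β :=
  { e.permCongr with
    map_mul' := fun p q => by
      ext b
      simp [Equiv.permCongr_apply, Equiv.Perm.mul_apply] }

lemma permCongrMulEquiv_sign {α β : Type*} [DecidableEq α] [Fintype α] [DecidableEq β] [Fintype β]
    (e : α ≃ β) (p : Equiv.Perm α) :
    Equiv.Perm.sign (permCongrMulEquiv e p) = Equiv.Perm.sign p :=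
  Equiv.Perm.sign_permCongr e p

lemma exists_iso_A4 (G : Type*) [Group G] [Fintype G] (h : Nat.card G = 12)
    (H : ∀ x : G, orderOf x = 1 ∨ orderOf x = 2 ∨ orderOf x = 3) :
    Nonempty (G ≃* alternatingGroup (Fin 4)) := by
  classical
  haveI : Fact (Nat.Prime 3) := ⟨Nat.prime_three⟩
  haveI : Fintype (Sylow 3 G) := Fintype.ofFinite _
  obtain ⟨P₀⟩ : Nonempty (Sylow 3 G) := inferInstance
  have hPcard : ∀ P : Sylow 3 G, Nat.card (P : Subgroup G) = 3 := fun P => by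
    rw [P.card_eq_multiplicity, h, f12_3, pow_one]
  have hindex : ∀ P : Sylow 3 G, (P : Subgroup G).index = 4 := fun P => by
    have := Subgroup.card_mul_index (P : Subgroup G)
    rw [hPcard P, h] at this; omega
  have hS4 : Nat.card (Sylow 3 G) = 4 := by
    have hdvd4 : Nat.card (Sylow 3 G) ∣ 4 := hindex P₀ ▸ P₀.card_dvd_index
    have hmod : Nat.card (Sylow 3 G) % 3 = 1 % 3 := card_sylow_modEq_one 3 G
    have hne1 := sylow3_card_ne_one G h H
    rcases divisors4 _ hdvd4 with h' | h' | h' <;> omega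
  have hnorm : ∀ P : Sylow 3 G, Subgroup.normalizer (P : Set G) = (P : Subgroup G) := by
    intro P
    have hidx : (Subgroup.normalizer (P : Set G)).index = 4 := by
      rw [← P.card_eq_index_normalizer]; exact hS4
    have hcn : Nat.card (Subgroup.normalizer (P : Set G)) = 3 := by
      have := Subgroup.card_mul_index (Subgroup.normalizer (P : Set G))
      rw [hidx, h] at this; omega
    exact (Subgroup.eq_of_le_of_card_ge Subgroup.le_normalizer
      (by rw [hPcard P]; exact hcn.le)).symm
  set φ := MulAction.toPermHom G (Sylow 3 G) with hφ
  have hinj : Function.Injective φ := by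
    rw [← MonoidHom.ker_eq_bot_iff φ, eq_bot_iff]
    intro g hg
    rw [Subgroup.mem_bot]
    by_contra hg1
    have hgP : ∀ P : Sylow 3 G, g ∈ (P : Subgroup G) := by
      intro P
      have hsmul : g • P = P := by
        have h1 : φ g = 1 := hg
        calc g • P = (φ g) P := rfl
        _ = P := by rw [h1]; rfl
      have hmem : g ∈ MulAction.stabilizer G P := hsmul
      rwa [Sylow.stabilizer_eq_normalizer, hnorm P] at hmem
    haveI : Nontrivial (Sylow 3 G) := Fintype.one_lt_card_iff_nontrivial.mp
      (by rw [← Nat.card_eq_fintype_card]; omega)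
    obtain ⟨P1, P2, hP12⟩ := exists_pair_ne (Sylow 3 G)
    have hog : orderOf g = 3 := by
      have hdv : orderOf g ∣ 3 := hPcard P1 ▸ Subgroup.orderOf_dvd_natCard _ (hgP P1)
      rcases (Nat.Prime.eq_one_or_self_of_dvd Nat.prime_three _ hdv) with h' | h'
      · exact absurd (orderOf_eq_one_iff.mp h') hg1
      · exact h'
    have hz : ∀ P : Sylow 3 G, Subgroup.zpowers g = (P : Subgroup G) := fun P =>
      Subgroup.eq_of_le_of_card_ge (Subgroup.zpowers_le.mpr (hgP P))
        (by rw [hPcard P, Nat.card_zpowers, hog])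
    exact hP12 (Sylow.ext ((hz P1).symm.trans (hz P2)))
  have hSf : Fintype.card (Sylow 3 G) = 4 := by rw [← Nat.card_eq_fintype_card]; exact hS4
  haveI : Nontrivial (Sylow 3 G) := Fintype.one_lt_card_iff_nontrivial.mp (by omega)
  set R := φ.range with hR
  have hcR : Nat.card R = 12 := by
    rw [← h]; exact (Nat.card_congr (MonoidHom.ofInjective hinj).toEquiv).symm
  have hcPerm : Nat.card (Equiv.Perm (Sylow 3 G)) = 24 := by
    rw [Nat.card_eq_fintype_card, Fintype.card_perm, hSf]; decide
  have hidxR : R.index = 2 := by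
    have := Subgroup.card_mul_index R
    rw [hcR, hcPerm] at this; omega
  have halt : alternatingGroup (Sylow 3 G) ≤ R := by
    rw [← Equiv.Perm.closure_three_cycles_eq_alternating, Subgroup.closure_le]
    intro σ hσ
    have h3 : σ ^ 3 = 1 := by
      have h3' := pow_orderOf_eq_one σ
      rwa [Equiv.Perm.IsThreeCycle.orderOf hσ] at h3'
    have hs : σ = (σ ^ 2) ^ 2 := by
      rw [← pow_mul, show 2*2 = 3+1 by norm_num, pow_succ, h3, one_mul]
    have : (σ ^ 2) ^ 2 ∈ R := Subgroup.sq_mem_of_index_two hidxR (σ ^ 2)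
    rw [← hs] at this
    exact this
  have hcAlt : Nat.card (alternatingGroup (Sylow 3 G)) = 12 := by
    have h2 := two_mul_card_alternatingGroup (α := Sylow 3 G)
    rw [Fintype.card_perm, hSf, show Nat.factorial 4 = 24 from rfl] at h2
    rw [Nat.card_eq_fintype_card]; omega
  have hReq : R = alternatingGroup (Sylow 3 G) :=
    (Subgroup.eq_of_le_of_card_ge halt (by rw [hcR, hcAlt])).symm
  have e : Sylow 3 G ≃ Fin 4 := Fintype.equivFinOfCardEq hSf
  set pc := permCongrMulEquiv e with hpc
  have hsign : ∀ p : Equiv.Perm (Sylow 3 G), Equiv.Perm.sign (pc p) = Equiv.Perm.sign p :=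
    fun p => permCongrMulEquiv_sign e p
  have hmap : (alternatingGroup (Sylow 3 G)).map (pc : Equiv.Perm (Sylow 3 G) →* Equiv.Perm (Fin 4))
      = alternatingGroup (Fin 4) := by
    ext q
    simp only [Subgroup.mem_map]
    constructor
    · rintro ⟨p, hp, rfl⟩
      rw [Equiv.Perm.mem_alternatingGroup] at hp ⊢
      rw [show ((pc : Equiv.Perm (Sylow 3 G) →* Equiv.Perm (Fin 4)) p) = pc p from rfl,
        hsign p, hp]
    · intro hq
      refine ⟨pc.symm q, ?_, pc.apply_symm_apply q⟩
      rw [Equiv.Perm.mem_alternatingGroup] at hq ⊢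
      have := hsign (pc.symm q)
      rw [pc.apply_symm_apply q] at this
      rw [← this, hq]
  exact ⟨(((MonoidHom.ofInjective hinj).trans (MulEquiv.subgroupCongr hReq)).trans
    (pc.subgroupMap (alternatingGroup (Sylow 3 G)))).trans (MulEquiv.subgroupCongr hmap)⟩



set_option maxRecDepth 20000 in
lemma A4_pow_six (x : alternatingGroup (Fin 4)) : x ^ 6 = 1 := by revert x; decide

set_option maxRecDepth 20000 in
lemma A4_pow_23 (x : alternatingGroup (Fin 4)) : x ^ 2 = 1 ∨ x ^ 3 = 1 := by revert x; decide

lemma divisors6 (n : ℕ) (hd : n ∣ 6) : n = 1 ∨ n = 2 ∨ n = 3 ∨ n = 6 := by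
  have h1 : 1 ≤ n := Nat.pos_of_dvd_of_pos hd (by norm_num)
  have h2 : n ≤ 6 := Nat.le_of_dvd (by norm_num) hd
  interval_cases n <;> revert hd <;> decide

lemma A4_orders (x : alternatingGroup (Fin 4)) :
    orderOf x = 1 ∨ orderOf x = 2 ∨ orderOf x = 3 := by
  have hd : orderOf x ∣ 6 := orderOf_dvd_iff_pow_eq_one.mpr (A4_pow_six x)
  rcases divisors6 _ hd with h' | h' | h' | h'
  · exact Or.inl h'
  · exact Or.inr (Or.inl h')
  · exact Or.inr (Or.inr h')
  · exfalso
    rcases A4_pow_23 x with h2 | h2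
    · have := orderOf_dvd_iff_pow_eq_one.mpr h2
      rw [h'] at this; norm_num at this
    · have := orderOf_dvd_iff_pow_eq_one.mpr h2
      rw [h'] at this; norm_num at this

theorem omegaRho_order_twelve (G : Type*) [Group G] [Finite G] (h : Nat.card G = 12) :
    11 ≤ OmegaRho G ∧
    (OmegaRho G = 11 ↔ Nonempty (G ≃* alternatingGroup (Fin 4))) := by
  letI : Fintype G := Fintype.ofFinite G
  have hF : Fintype.card G = 12 := by rw [← Nat.card_eq_fintype_card]; exact h
  obtain ⟨h1, h2⟩ := omegaRho_twelve G hF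
  refine ⟨h1, ?_⟩
  rw [h2]
  constructor
  · intro hall
    exact exists_iso_A4 G h hall
  · rintro ⟨f⟩ x
    have hx := A4_orders (f x)
    have heq : orderOf (f x) = orderOf x :=
      orderOf_injective f.toMonoidHom f.injective x
    rwa [heq] at hx
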